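/- Let t ≥ 3, k ≥ 3, and l ≥ t + 1, and let n be a positive integer. Suppose φ is a coloring of the edges of the complete graph on vertex set {1, …, n} with two colors, 'first' and 'second', containing no monochromatic K_k in color 'first' and no monochromatic K_{l − t + 1} in color 'second'. Let χ be the 3-coloring of the edges of the complete graph on {1, …, t + 1} × {1, …, n} defined as follows. For block indices i > j, call the block pair (i, j) type B if (i, j) = (2, 1) or (i ≥ 4 and 3 ≤ j ≤ i − 1), and type C if i ≥ 3 and j ∈ {1, 2}. Set: (a) χ((i, v), (i, w)) = 2 if φ(v, w) = 'first' and 3 if φ(v, w) = 'second'; (b) for i ≠ j with type B block pair: χ((i, v), (j, w)) = 3 if v = w, else 2 if φ(v, w) = 'first' and 1 if φ(v, w) = 'second'; (c) for i ≠ j with type C block pair: χ((i, v), (j, w)) = 1 if v = w, else 2 if φ(v, w) = 'first' and 3 if φ(v, w) = 'second'. Then χ contains no monochromatic K_t of color 1. -/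
import Mathlib


/-- The two colors of the base coloring `φ`. -/
inductive TwoColor
  | first
  | second
deriving DecidableEq

/-- A coloring `χ` of the edges of the complete graph on `V` contains a
monochromatic `K_m` of color `c`: there are `m` vertices all of whose
pairwise edges receive color `c`. -/
def HasMonoClique {V C : Type*} (χ : V → V → C) (c : C) (m : ℕ) : Prop :=
  ∃ s : Finset V, s.card = m ∧ ∀ u ∈ s, ∀ v ∈ s, u ≠ v → χ u v = c

/-- Block pair `(i, j)` (with 1-based block indices, `i > j`) is of type `B`:
`(i, j) = (2, 1)`, or `i ≥ 4` and `3 ≤ j ≤ i - 1`. -/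
def BlockTypeB (i j : ℕ) : Prop :=
  (i = 2 ∧ j = 1) ∨ (4 ≤ i ∧ 3 ≤ j ∧ j ≤ i - 1)

instance (i j : ℕ) : Decidable (BlockTypeB i j) := by
  unfold BlockTypeB; infer_instance

/-- The 3-coloring `χ` of the edges of the complete graph on
`{1, …, t+1} × {1, …, n}` built from a two-coloring `φ` of the edges of `K_n`.
Vertices are pairs `(i, v)` with block index `i` (represented 0-based, so the
1-based block index is `i + 1`).  Within a block the colors `first`/`second` of
`φ` become `2`/`3`; between two distinct blocks whose (ordered) 1-based pair is
of type `B`, diagonal edges (`v = w`) get color `3` and otherwise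
`first`/`second` become `2`/`1`; between blocks of type `C` (all remaining
pairs, i.e. `i ≥ 3` and `j ∈ {1, 2}`), diagonal edges get color `1` and
otherwise `first`/`second` become `2`/`3`. -/
def chi (t n : ℕ) (φ : Fin n → Fin n → TwoColor) :
    Fin (t + 1) × Fin n → Fin (t + 1) × Fin n → ℕ := fun p q =>
  if p.1 = q.1 then
    if φ p.2 q.2 = TwoColor.first then 2 else 3
  else
    if BlockTypeB (max (p.1.1 + 1) (q.1.1 + 1)) (min (p.1.1 + 1) (q.1.1 + 1)) then
      if p.2 = q.2 then 3
      else if φ p.2 q.2 = TwoColor.first then 2 else 1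
    else
      if p.2 = q.2 then 1
      else if φ p.2 q.2 = TwoColor.first then 2 else 3

/-- The coloring `chi t n φ` contains no monochromatic `K_t` of color `1`. -/
theorem chi_no_mono_color_one (t k l n : ℕ) (ht : 3 ≤ t) (hk : 3 ≤ k) (hl : t + 1 ≤ l) (hn : 0 < n)
    (φ : Fin n → Fin n → TwoColor)
    (hφsymm : ∀ v w, φ v w = φ w v)
    (hφ1 : ¬ HasMonoClique φ TwoColor.first k)
    (hφ2 : ¬ HasMonoClique φ TwoColor.second (l - t + 1)) :
    ¬ HasMonoClique (chi t n φ) 1 t := by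
  classical
  rintro ⟨s, hcard, hmono⟩
  -- distinct vertices of the clique lie in distinct blocks
  have hfstne : ∀ u ∈ s, ∀ v ∈ s, u ≠ v → u.1 ≠ v.1 := by
    intro u hu v hv huv h
    have h1 := hmono u hu v hv huv
    rw [chi, if_pos h] at h1
    split_ifs at h1 <;> omega
  have hinj : Set.InjOn (fun u : Fin (t+1) × Fin n => u.1.1) ↑s := by
    intro u hu v hv h
    by_contra hne
    exact hfstne u hu v hv hne (Fin.ext h)
  -- cross (type C) edges force equal second coordinates
  have lemC : ∀ u ∈ s, ∀ v ∈ s, u.1.1 ≤ 1 → ¬ v.1.1 ≤ 1 → u.2 = v.2 := by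
    intro u hu v hv hus hvb
    have hne : u ≠ v := by
      intro h; rw [h] at hus; exact hvb hus
    have h1 := hmono u hu v hv hne
    have hfst : u.1 ≠ v.1 := hfstne u hu v hv hne
    rw [chi, if_neg hfst] at h1
    have hB : ¬ BlockTypeB (max (u.1.1 + 1) (v.1.1 + 1)) (min (u.1.1 + 1) (v.1.1 + 1)) := by
      unfold BlockTypeB; omega
    rw [if_neg hB] at h1
    by_contra hne2
    rw [if_neg hne2] at h1
    split_ifs at h1 <;> omega
  -- type B edges force distinct second coordinates: both blocks big
  have lemBB : ∀ u ∈ s, ∀ v ∈ s, u ≠ v → ¬ u.1.1 ≤ 1 → ¬ v.1.1 ≤ 1 → u.2 ≠ v.2 := by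
    intro u hu v hv hne hub hvb
    have h1 := hmono u hu v hv hne
    have hfst : u.1 ≠ v.1 := hfstne u hu v hv hne
    have hfstv : u.1.1 ≠ v.1.1 := fun h => hfst (Fin.ext h)
    rw [chi, if_neg hfst] at h1
    have hB : BlockTypeB (max (u.1.1 + 1) (v.1.1 + 1)) (min (u.1.1 + 1) (v.1.1 + 1)) := by
      unfold BlockTypeB; omega
    rw [if_pos hB] at h1
    intro h2
    rw [if_pos h2] at h1
    omega
  -- type B edges force distinct second coordinates: both blocks small
  have lemBS : ∀ u ∈ s, ∀ v ∈ s, u ≠ v → u.1.1 ≤ 1 → v.1.1 ≤ 1 → u.2 ≠ v.2 := by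
    intro u hu v hv hne hus hvs
    have h1 := hmono u hu v hv hne
    have hfst : u.1 ≠ v.1 := hfstne u hu v hv hne
    have hfstv : u.1.1 ≠ v.1.1 := fun h => hfst (Fin.ext h)
    rw [chi, if_neg hfst] at h1
    have hB : BlockTypeB (max (u.1.1 + 1) (v.1.1 + 1)) (min (u.1.1 + 1) (v.1.1 + 1)) := by
      unfold BlockTypeB; omega
    rw [if_pos hB] at h1
    intro h2
    rw [if_pos h2] at h1
    omega
  set Ss := s.filter (fun u => u.1.1 ≤ 1) with hSs
  set Sb := s.filter (fun u => ¬ u.1.1 ≤ 1) with hSb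
  have hsum : Ss.card + Sb.card = t := by
    rw [hSs, hSb, Finset.card_filter_add_card_filter_not, hcard]
  have hSsub : ∀ x ∈ Ss, x ∈ s := fun x hx => (Finset.mem_filter.mp hx).1
  have hSbub : ∀ x ∈ Sb, x ∈ s := fun x hx => (Finset.mem_filter.mp hx).1
  have hSsle : Ss.card ≤ 2 := by
    have himg : (Ss.image (fun u => u.1.1)).card = Ss.card :=
      Finset.card_image_of_injOn (hinj.mono (by intro x hx; exact hSsub x hx))
    have hsub : Ss.image (fun u => u.1.1) ⊆ Finset.range 2 := by
      intro x hx
      simp only [Finset.mem_image] at hx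
      obtain ⟨u, hu, rfl⟩ := hx
      have h2 := (Finset.mem_filter.mp hu).2
      simp only [Finset.mem_range]; omega
    calc Ss.card = (Ss.image (fun u => u.1.1)).card := himg.symm
      _ ≤ (Finset.range 2).card := Finset.card_le_card hsub
      _ = 2 := by simp
  have hSble : Sb.card ≤ t - 1 := by
    have himg : (Sb.image (fun u => u.1.1)).card = Sb.card :=
      Finset.card_image_of_injOn (hinj.mono (by intro x hx; exact hSbub x hx))
    have hsub : Sb.image (fun u => u.1.1) ⊆ Finset.Ico 2 (t + 1) := by
      intro x hx
      simp only [Finset.mem_image] at hx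
      obtain ⟨u, hu, rfl⟩ := hx
      have h2 := (Finset.mem_filter.mp hu).2
      have h3 := u.1.isLt
      simp only [Finset.mem_Ico]; omega
    calc Sb.card = (Sb.image (fun u => u.1.1)).card := himg.symm
      _ ≤ (Finset.Ico 2 (t + 1)).card := Finset.card_le_card hsub
      _ = t - 1 := by rw [Nat.card_Ico]; omega
  -- case analysis on the number of "small" blocks used
  rcases Nat.lt_or_ge Ss.card 2 with hcase | hcase
  · -- exactly one small block, at least two big blocks
    have hb2 : 1 < Sb.card := by omega
    obtain ⟨u, hu, v, hv, huv⟩ := Finset.one_lt_card.mp hb2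
    have hs1 : 0 < Ss.card := by omega
    obtain ⟨w, hw⟩ := Finset.card_pos.mp hs1
    have hwu := lemC w (hSsub w hw) u (hSbub u hu) (Finset.mem_filter.mp hw).2
      (Finset.mem_filter.mp hu).2
    have hwv := lemC w (hSsub w hw) v (hSbub v hv) (Finset.mem_filter.mp hw).2
      (Finset.mem_filter.mp hv).2
    exact lemBB u (hSbub u hu) v (hSbub v hv) huv (Finset.mem_filter.mp hu).2
      (Finset.mem_filter.mp hv).2 (hwu ▸ hwv)
  · -- two small blocks, at least one big block
    obtain ⟨u, hu, v, hv, huv⟩ := Finset.one_lt_card.mp (by omega : 1 < Ss.card)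
    have hb1 : 0 < Sb.card := by omega
    obtain ⟨w, hw⟩ := Finset.card_pos.mp hb1
    have huw := lemC u (hSsub u hu) w (hSbub w hw) (Finset.mem_filter.mp hu).2
      (Finset.mem_filter.mp hw).2
    have hvw := lemC v (hSsub v hv) w (hSbub w hw) (Finset.mem_filter.mp hv).2
      (Finset.mem_filter.mp hw).2
    exact lemBS u (hSsub u hu) v (hSsub v hv) huv (Finset.mem_filter.mp hu).2
      (Finset.mem_filter.mp hv).2 (huw.trans hvw.symm)
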